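/- Under the two-grid assumptions and the condition N(A^{1/2} M̄ A^{1/2}) ∩ N(Pᵀ(I − AM)A^{1/2}) = N(A), the symmetric positive semidefinite matrix F_TG := A^{1/2} M̄ A^{1/2} + (I − A^{1/2}MᵀA^{1/2}) Π (I − A^{1/2}MA^{1/2}) satisfies N(F_TG) = N(A), and consequently R(F_TG) = R(A). -/

import Mathlib

open Matrix

/-- Euclidean norm of a vector in `ℝⁿ`. -/
noncomputable def enorm {n : ℕ} (v : Fin n → ℝ) : ℝ := Real.sqrt (v ⬝ᵥ v)

/-- The `A`-seminorm `‖v‖_A = sqrt (vᵀ A v)` of a vector. -/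
noncomputable def vnorm {n : ℕ} (A : Matrix (Fin n) (Fin n) ℝ) (v : Fin n → ℝ) : ℝ :=
  Real.sqrt (v ⬝ᵥ A.mulVec v)

/-- The `A`-seminorm of a matrix: sup over `v ∉ N(A)` of `‖Xv‖_A / ‖v‖_A`. -/
noncomputable def matNorm {n : ℕ} (A X : Matrix (Fin n) (Fin n) ℝ) : ℝ :=
  sSup ((fun v => vnorm A (X.mulVec v) / vnorm A v) '' {v | A.mulVec v ≠ 0})

/-- Penrose conditions: `X` is the Moore–Penrose inverse of `S`. -/
def IsMP {m : ℕ} (S X : Matrix (Fin m) (Fin m) ℝ) : Prop :=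
  S * X * S = S ∧ X * S * X = X ∧ (S * X)ᵀ = S * X ∧ (X * S)ᵀ = X * S

/-- `eigk S k` is the `k`-th smallest eigenvalue (1-indexed, counted with
multiplicity) of a symmetric matrix `S` (junk value otherwise). -/
noncomputable def eigk {m : ℕ} (S : Matrix (Fin m) (Fin m) ℝ) (k : ℕ) : ℝ :=
  if hS : S.IsHermitian then
    if h : k - 1 < m then hS.eigenvalues (Tuple.sort hS.eigenvalues ⟨k - 1, h⟩) else 0
  else 0

/-- The positive semidefinite square root of a positive semidefinite matrix
(the definition `Matrix.PosSemidef.sqrt` of the older Mathlib, since removed). -/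
noncomputable def Matrix.PosSemidef.sqrt {n : Type*} [Fintype n] [DecidableEq n]
    {A : Matrix n n ℝ} (hA : A.PosSemidef) : Matrix n n ℝ :=
  hA.1.eigenvectorUnitary.1 * diagonal ((↑) ∘ (√·) ∘ hA.1.eigenvalues) *
  (star hA.1.eigenvectorUnitary : Matrix n n ℝ)

/-!
With `s = A^{1/2}`, the bound `‖I - MA‖_A ≤ 1` says `(Av)ᵀ M̄ (Av) ≥ 0` for every `v`, because
`A - (I - MA)ᵀ A (I - MA) = A M̄ A`; as `R(s) = R(s²) = R(A)`, this makes `s M̄ s` positive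
semidefinite. Since `A_c = (sP)ᵀ(sP)`, `Π` is the orthogonal projection onto `R(sP)`, so `F_TG` is
a sum of two positive semidefinite matrices and `N(F_TG) = N(s M̄ s) ∩ N((sP)ᵀ(I - sMs))`, where
`(sP)ᵀ(I - sMs) = Pᵀ(I - AM)s`; the hypothesis identifies this with `N(A)`. Symmetric matrices with
the same kernel have the same range.
-/

namespace Matrix

section Symmetric

variable {ι : Type*} [Fintype ι]

lemma IsSymm.mulVec_dotProduct {R : Type*} [CommSemiring R] {X : Matrix ι ι R} (hX : X.IsSymm)
    (v w : ι → R) : X *ᵥ v ⬝ᵥ w = v ⬝ᵥ X *ᵥ w := by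
  rw [dotProduct_mulVec, ← mulVec_transpose, hX.eq]

lemma mulVec_dotProduct_mulVec_mulVec {R : Type*} [CommSemiring R] (Z Y : Matrix ι ι R)
    (a : ι → R) : Z *ᵥ a ⬝ᵥ Y *ᵥ (Z *ᵥ a) = a ⬝ᵥ (Zᵀ * Y * Z) *ᵥ a := by
  rw [← mulVec_mulVec, ← mulVec_mulVec, dotProduct_mulVec a, vecMul_transpose]

variable {X Y : Matrix ι ι ℝ}

lemma IsSymm.exists_mul_self_mulVec_eq (hX : X.IsSymm) (x : ι → ℝ) :
    ∃ a, (X * X) *ᵥ a = X *ᵥ x := by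
  have hle : LinearMap.range (X * X).mulVecLin ≤ LinearMap.range X.mulVecLin := by
    rw [mulVecLin_mul]
    exact LinearMap.range_comp_le_range _ _
  have hrank : (X * X).rank = X.rank := by
    simpa only [hX.eq] using rank_transpose_mul_self X
  show X *ᵥ x ∈ LinearMap.range (X * X).mulVecLin
  rw [Submodule.eq_of_le_of_finrank_eq hle hrank]
  exact LinearMap.mem_range_self _ x

lemma IsSymm.exists_eq_mulVec_add (hX : X.IsSymm) (x : ι → ℝ) :
    ∃ a w, x = X *ᵥ a + w ∧ X *ᵥ w = 0 := by
  obtain ⟨a, ha⟩ := hX.exists_mul_self_mulVec_eq x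
  refine ⟨a, x - X *ᵥ a, (add_sub_cancel _ _).symm, ?_⟩
  rw [mulVec_sub, mulVec_mulVec, ha, sub_self]

lemma IsSymm.exists_mulVec_eq_of_ker_subset (hX : X.IsSymm) (hY : Y.IsSymm)
    (hker : ∀ v, X *ᵥ v = 0 → Y *ᵥ v = 0) (b : ι → ℝ) : ∃ a, X *ᵥ a = Y *ᵥ b := by
  obtain ⟨a, w, hb, hw⟩ := hX.exists_eq_mulVec_add (Y *ᵥ b)
  have hww : w ⬝ᵥ w = 0 := calc
    w ⬝ᵥ w = (Y *ᵥ b - X *ᵥ a) ⬝ᵥ w := by rw [hb, add_sub_cancel_left]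
    _ = b ⬝ᵥ Y *ᵥ w - a ⬝ᵥ X *ᵥ w := by
      rw [sub_dotProduct, hY.mulVec_dotProduct, hX.mulVec_dotProduct]
    _ = 0 := by rw [hker w hw, hw, dotProduct_zero, dotProduct_zero, sub_zero]
  exact ⟨a, by rw [hb, dotProduct_self_eq_zero.mp hww, add_zero]⟩

lemma IsSymm.range_eq_of_ker_eq (hX : X.IsSymm) (hY : Y.IsSymm)
    (hker : {v | X *ᵥ v = 0} = {v | Y *ᵥ v = 0}) :
    {v | ∃ w, v = X *ᵥ w} = {v | ∃ w, v = Y *ᵥ w} := by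
  have hXY : ∀ v, X *ᵥ v = 0 ↔ Y *ᵥ v = 0 := Set.ext_iff.mp hker
  ext v
  constructor
  · rintro ⟨b, rfl⟩
    obtain ⟨a, ha⟩ := hY.exists_mulVec_eq_of_ker_subset hX (fun v => (hXY v).mpr) b
    exact ⟨a, ha.symm⟩
  · rintro ⟨b, rfl⟩
    obtain ⟨a, ha⟩ := hX.exists_mulVec_eq_of_ker_subset hY (fun v => (hXY v).mp) b
    exact ⟨a, ha.symm⟩

end Symmetric

section PosSemidef

open scoped ComplexOrder

variable {ι κ 𝕜 : Type*} [Fintype ι] [Fintype κ] [RCLike 𝕜]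

lemma PosSemidef.add_mulVec_eq_zero_iff {X Y : Matrix ι ι 𝕜} (hX : X.PosSemidef)
    (hY : Y.PosSemidef) (v : ι → 𝕜) :
    (X + Y) *ᵥ v = 0 ↔ X *ᵥ v = 0 ∧ Y *ᵥ v = 0 := by
  rw [← (hX.add hY).dotProduct_mulVec_zero_iff, ← hX.dotProduct_mulVec_zero_iff,
    ← hY.dotProduct_mulVec_zero_iff, add_mulVec, dotProduct_add,
    add_eq_zero_iff_of_nonneg (hX.dotProduct_mulVec_nonneg v) (hY.dotProduct_mulVec_nonneg v)]

lemma PosSemidef.conjTranspose_mul_mul_mulVec_eq_zero_iff {X : Matrix κ κ 𝕜} (hX : X.PosSemidef)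
    (B : Matrix κ ι 𝕜) (v : ι → 𝕜) : (Bᴴ * X * B) *ᵥ v = 0 ↔ X *ᵥ (B *ᵥ v) = 0 := by
  rw [← (hX.conjTranspose_mul_mul_same B).dotProduct_mulVec_zero_iff,
    ← hX.dotProduct_mulVec_zero_iff, ← mulVec_mulVec, ← mulVec_mulVec, dotProduct_mulVec,
    star_mulVec]

end PosSemidef

namespace PosSemidef

variable {ι : Type*} [Fintype ι] [DecidableEq ι] {A : Matrix ι ι ℝ}

lemma isSymm_sqrt (hA : A.PosSemidef) : hA.sqrt.IsSymm := by
  rw [← isHermitian_iff_isSymm, sqrt, star_eq_conjTranspose]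
  exact isHermitian_mul_mul_conjTranspose _ (isHermitian_diagonal _)

lemma sqrt_mul_self (hA : A.PosSemidef) : hA.sqrt * hA.sqrt = A := by
  set U : Matrix ι ι ℝ := hA.1.eigenvectorUnitary.1
  set D : Matrix ι ι ℝ := diagonal ((↑) ∘ (√·) ∘ hA.1.eigenvalues)
  have hU : star U * U = 1 := by simp [U]
  have hD : D * D = diagonal ((↑) ∘ hA.1.eigenvalues) := by
    simp only [D, diagonal_mul_diagonal]
    congr 1
    funext i
    simp [Real.mul_self_sqrt (hA.eigenvalues_nonneg i)]
  calc hA.sqrt * hA.sqrt = U * (D * (star U * U) * D) * star U := by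
        simp only [sqrt, U, D, Matrix.mul_assoc]
    _ = A := by rw [hU, Matrix.mul_one, hD]; exact hA.1.spectral_theorem.symm

lemma dotProduct_mulVec_eq_sqrt (hA : A.PosSemidef) (v : ι → ℝ) :
    v ⬝ᵥ A *ᵥ v = hA.sqrt *ᵥ v ⬝ᵥ hA.sqrt *ᵥ v := by
  rw [hA.isSymm_sqrt.mulVec_dotProduct, mulVec_mulVec, hA.sqrt_mul_self]

end PosSemidef

end Matrix

namespace IsMP

variable {m : ℕ} {S X Y : Matrix (Fin m) (Fin m) ℝ}

lemma transpose (h : IsMP S X) : IsMP Sᵀ Xᵀ := by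
  obtain ⟨h1, h2, h3, h4⟩ := h
  refine ⟨?_, ?_, ?_, ?_⟩
  · simpa only [transpose_mul, Matrix.mul_assoc] using congrArg Matrix.transpose h1
  · simpa only [transpose_mul, Matrix.mul_assoc] using congrArg Matrix.transpose h2
  · rw [← transpose_mul, h4, h4]
  · rw [← transpose_mul, h3, h3]

lemma unique (hX : IsMP S X) (hY : IsMP S Y) : X = Y := by
  obtain ⟨hX1, hX2, hX3, hX4⟩ := hX
  obtain ⟨hY1, hY2, hY3, hY4⟩ := hY
  have hSX : S * X = S * Y := calc
    S * X = (S * Y) * (S * X) := by rw [← Matrix.mul_assoc, hY1]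
    _ = (S * Y)ᵀ * (S * X)ᵀ := by rw [hY3, hX3]
    _ = (S * X * S * Y)ᵀ := by rw [← transpose_mul, Matrix.mul_assoc (S * X)]
    _ = S * Y := by rw [hX1, hY3]
  have hXS : X * S = Y * S := calc
    X * S = (X * S) * (Y * S) := by rw [Matrix.mul_assoc X, ← Matrix.mul_assoc S, hY1]
    _ = (X * S)ᵀ * (Y * S)ᵀ := by rw [hX4, hY4]
    _ = (Y * (S * X * S))ᵀ := by rw [← transpose_mul, Matrix.mul_assoc, Matrix.mul_assoc]
    _ = Y * S := by rw [hX1, hY4]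
  calc X = X * S * X := hX2.symm
    _ = Y * S * Y := by rw [Matrix.mul_assoc, hSX, ← Matrix.mul_assoc, hXS]
    _ = Y := hY2

lemma isSymm (hS : S.IsSymm) (h : IsMP S X) : X.IsSymm :=
  (hS.eq ▸ h.transpose).unique h

variable {ι : Type*} [Fintype ι] {B : Matrix ι (Fin m) ℝ}

lemma isSymm_of_transpose_mul_self (h : IsMP (Bᵀ * B) X) : X.IsSymm :=
  h.isSymm (by rw [IsSymm, transpose_mul, transpose_transpose])

lemma mul_mul_transpose_mul_self (h : IsMP (Bᵀ * B) X) : B * X * (Bᵀ * B) = B := by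
  rw [ext_iff_mulVec]
  intro v
  have hgram : (Bᵀ * B) *ᵥ ((X * (Bᵀ * B)) *ᵥ v - v) = 0 := by
    rw [mulVec_sub, mulVec_mulVec, ← Matrix.mul_assoc, h.1, sub_self]
  have hB : (X * (Bᵀ * B)) *ᵥ v - v ∈ LinearMap.ker B.mulVecLin := by
    rw [← ker_mulVecLin_transpose_mul_self]
    exact hgram
  rw [LinearMap.mem_ker, mulVecLin_apply] at hB
  rwa [mulVec_sub, mulVec_mulVec, ← Matrix.mul_assoc, sub_eq_zero] at hB

lemma transpose_mul_mul_mul_transpose (h : IsMP (Bᵀ * B) X) : Bᵀ * (B * X * Bᵀ) = Bᵀ := by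
  have := congrArg Matrix.transpose h.mul_mul_transpose_mul_self
  rw [transpose_mul, transpose_mul, transpose_mul, transpose_transpose,
    h.isSymm_of_transpose_mul_self.eq] at this
  simpa only [Matrix.mul_assoc] using this

lemma posSemidef_mul_mul_transpose (h : IsMP (Bᵀ * B) X) : (B * X * Bᵀ).PosSemidef := by
  have hsymm : (B * X * Bᵀ)ᴴ = B * X * Bᵀ := by
    rw [conjTranspose_eq_transpose_of_trivial, transpose_mul, transpose_mul, transpose_transpose,
      h.isSymm_of_transpose_mul_self.eq, Matrix.mul_assoc]
  have hidem : (B * X * Bᵀ) * (B * X * Bᵀ) = B * X * Bᵀ := by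
    rw [Matrix.mul_assoc (B * X), h.transpose_mul_mul_mul_transpose]
  simpa only [hsymm, hidem] using posSemidef_conjTranspose_mul_self (B * X * Bᵀ)

lemma mul_mul_transpose_mulVec_eq_zero_iff (h : IsMP (Bᵀ * B) X) (y : ι → ℝ) :
    (B * X * Bᵀ) *ᵥ y = 0 ↔ Bᵀ *ᵥ y = 0 := by
  constructor
  · intro hy
    rw [← h.transpose_mul_mul_mul_transpose, ← mulVec_mulVec, hy, mulVec_zero]
  · intro hy
    rw [← mulVec_mulVec, hy, mulVec_zero]

end IsMP

section TwoGrid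

open scoped Matrix.Norms.L2Operator

variable {n : ℕ} {A M : Matrix (Fin n) (Fin n) ℝ}

lemma vnorm_eq_norm_sqrt_mulVec (hA : A.PosSemidef) (v : Fin n → ℝ) :
    vnorm A v = ‖(EuclideanSpace.equiv (Fin n) ℝ).symm (hA.sqrt *ᵥ v)‖ := by
  rw [norm_eq_sqrt_real_inner, EuclideanSpace.inner_eq_star_dotProduct, vnorm,
    hA.dotProduct_mulVec_eq_sqrt]
  simp

lemma vnorm_nonneg (v : Fin n → ℝ) : 0 ≤ vnorm A v := Real.sqrt_nonneg _

lemma vnorm_sq (hA : A.PosSemidef) (v : Fin n → ℝ) : vnorm A v ^ 2 = v ⬝ᵥ A *ᵥ v :=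
  Real.sq_sqrt (by simpa using hA.dotProduct_mulVec_nonneg v)

/- `matNorm` is an `sSup`, whose junk value on an unbounded set is `0`; boundedness comes from
`s (1 - MA) = (1 - sMs) s`. -/
lemma bddAbove_vnorm_div (hA : A.PosSemidef) :
    BddAbove ((fun v => vnorm A ((1 - M * A) *ᵥ v) / vnorm A v) '' {v | A *ᵥ v ≠ 0}) := by
  have hsE : hA.sqrt * (1 - M * A) = (1 - hA.sqrt * M * hA.sqrt) * hA.sqrt := calc
    hA.sqrt * (1 - M * A) = hA.sqrt * (1 - M * (hA.sqrt * hA.sqrt)) := by rw [hA.sqrt_mul_self]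
    _ = (1 - hA.sqrt * M * hA.sqrt) * hA.sqrt := by noncomm_ring
  refine ⟨‖1 - hA.sqrt * M * hA.sqrt‖, ?_⟩
  rintro _ ⟨v, -, rfl⟩
  refine div_le_of_le_mul₀ (vnorm_nonneg v) (norm_nonneg _) ?_
  rw [vnorm_eq_norm_sqrt_mulVec hA, vnorm_eq_norm_sqrt_mulVec hA, mulVec_mulVec, hsE,
    ← mulVec_mulVec]
  exact l2_opNorm_mulVec _ ((EuclideanSpace.equiv (Fin n) ℝ).symm (hA.sqrt *ᵥ v))

lemma vnorm_mulVec_le_of_matNorm_le_one (hA : A.PosSemidef) (hM : matNorm A (1 - M * A) ≤ 1)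
    (v : Fin n → ℝ) : vnorm A ((1 - M * A) *ᵥ v) ≤ vnorm A v := by
  by_cases hv : A *ᵥ v = 0
  · rw [sub_mulVec, one_mulVec, ← mulVec_mulVec, hv, mulVec_zero, sub_zero]
  have hvA : v ⬝ᵥ A *ᵥ v ≠ 0 := by simpa using (hA.dotProduct_mulVec_zero_iff v).not.mpr hv
  have hnonneg : 0 ≤ v ⬝ᵥ A *ᵥ v := by simpa using hA.dotProduct_mulVec_nonneg v
  have hpos : 0 < vnorm A v := Real.sqrt_pos.mpr (hnonneg.lt_of_ne' hvA)
  rw [← div_le_one hpos]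
  exact (le_csSup (bddAbove_vnorm_div hA) ⟨v, hv, rfl⟩).trans hM

lemma dotProduct_smoother_nonneg (hA : A.PosSemidef) (hM : matNorm A (1 - M * A) ≤ 1)
    (a : Fin n → ℝ) : 0 ≤ A *ᵥ a ⬝ᵥ (M + Mᵀ - Mᵀ * A * M) *ᵥ (A *ᵥ a) := by
  have hAT : Aᵀ = A := (isHermitian_iff_isSymm.mp hA.1).eq
  have hid : Aᵀ * (M + Mᵀ - Mᵀ * A * M) * A = A - (1 - M * A)ᵀ * A * (1 - M * A) := by
    rw [hAT, transpose_sub, transpose_one, transpose_mul, hAT]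
    noncomm_ring
  have hle := pow_le_pow_left₀ (vnorm_nonneg _) (vnorm_mulVec_le_of_matNorm_le_one hA hM a) 2
  rw [vnorm_sq hA, vnorm_sq hA] at hle
  rw [mulVec_dotProduct_mulVec_mulVec, hid, sub_mulVec, dotProduct_sub,
    ← mulVec_dotProduct_mulVec_mulVec]
  linarith

lemma posSemidef_sqrt_mul_smoother_mul_sqrt (hA : A.PosSemidef)
    (hM : matNorm A (1 - M * A) ≤ 1) : (hA.sqrt * (M + Mᵀ - Mᵀ * A * M) * hA.sqrt).PosSemidef := by
  have hs := hA.isSymm_sqrt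
  have hAT : Aᵀ = A := (isHermitian_iff_isSymm.mp hA.1).eq
  refine .of_dotProduct_mulVec_nonneg ?_ fun x => ?_
  · have hsmoother : (M + Mᵀ - Mᵀ * A * M).IsHermitian := by
      rw [isHermitian_iff_isSymm, IsSymm, transpose_sub, transpose_add, transpose_mul,
        transpose_mul, transpose_transpose, hAT, Matrix.mul_assoc, add_comm M]
    simpa only [conjTranspose_eq_transpose_of_trivial, hs.eq]
      using isHermitian_conjTranspose_mul_mul hA.sqrt hsmoother
  · obtain ⟨a, ha⟩ := hs.exists_mul_self_mulVec_eq x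
    have hx := mulVec_dotProduct_mulVec_mulVec hA.sqrt (M + Mᵀ - Mᵀ * A * M) x
    rw [hs.eq, ← ha, hA.sqrt_mul_self] at hx
    rw [star_trivial, ← hx]
    exact dotProduct_smoother_nonneg hA hM a

end TwoGrid

theorem stmt7_general {n nc : ℕ}
    (A M : Matrix (Fin n) (Fin n) ℝ) (P : Matrix (Fin n) (Fin nc) ℝ)
    (hA : A.PosSemidef)
    (hM : matNorm A (1 - M * A) ≤ 1)
    (Acd : Matrix (Fin nc) (Fin nc) ℝ) (hAcd : IsMP (Pᵀ * A * P) Acd)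
    (hcond : {v : Fin n → ℝ | (hA.sqrt * (M + Mᵀ - Mᵀ * A * M) * hA.sqrt).mulVec v = 0} ∩
        {v : Fin n → ℝ | (Pᵀ * (1 - A * M) * hA.sqrt).mulVec v = 0} =
      {v : Fin n → ℝ | A.mulVec v = 0})
    (Pi F : Matrix (Fin n) (Fin n) ℝ)
    (hPi : Pi = hA.sqrt * P * Acd * Pᵀ * hA.sqrt)
    (hF : F = hA.sqrt * (M + Mᵀ - Mᵀ * A * M) * hA.sqrt +
      (1 - hA.sqrt * Mᵀ * hA.sqrt) * Pi * (1 - hA.sqrt * M * hA.sqrt)) :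
    F.PosSemidef ∧
      {v : Fin n → ℝ | F.mulVec v = 0} = {v : Fin n → ℝ | A.mulVec v = 0} ∧
      {v : Fin n → ℝ | ∃ w, v = F.mulVec w} = {v : Fin n → ℝ | ∃ w, v = A.mulVec w} := by
  have hsmooth := posSemidef_sqrt_mul_smoother_mul_sqrt hA hM
  have hs := hA.isSymm_sqrt
  have hsA := hA.sqrt_mul_self
  generalize hA.sqrt = s at hs hsA hsmooth hcond hPi hF
  have hPi' : Pi = (s * P) * Acd * (s * P)ᵀ := by
    rw [hPi, transpose_mul, hs.eq]
    simp only [Matrix.mul_assoc]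
  have hE : 1 - s * Mᵀ * s = (1 - s * M * s)ᴴ := by
    rw [conjTranspose_eq_transpose_of_trivial, transpose_sub, transpose_one, transpose_mul,
      transpose_mul, hs.eq, Matrix.mul_assoc]
  have hgram : Pᵀ * A * P = (s * P)ᵀ * (s * P) := by
    rw [transpose_mul, hs.eq, ← hsA]
    simp only [Matrix.mul_assoc]
  have hrestr : (s * P)ᵀ * (1 - s * M * s) = Pᵀ * (1 - A * M) * s := by
    rw [transpose_mul, hs.eq, ← hsA]
    simp only [Matrix.mul_sub, Matrix.sub_mul, Matrix.mul_one, Matrix.mul_assoc]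
  rw [hgram] at hAcd
  have hcoarse := hPi' ▸ hAcd.posSemidef_mul_mul_transpose
  rw [hE] at hF
  have hFpsd : F.PosSemidef := hF ▸ hsmooth.add (hcoarse.conjTranspose_mul_mul_same _)
  have hker : {v | F *ᵥ v = 0} = {v | A *ᵥ v = 0} := by
    rw [← hcond]
    ext v
    simp only [Set.mem_inter_iff, Set.mem_ofPred_eq]
    rw [hF, hsmooth.add_mulVec_eq_zero_iff (hcoarse.conjTranspose_mul_mul_same _),
      hcoarse.conjTranspose_mul_mul_mulVec_eq_zero_iff, hPi',
      hAcd.mul_mul_transpose_mulVec_eq_zero_iff, mulVec_mulVec, hrestr]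
  exact ⟨hFpsd, hker, IsSymm.range_eq_of_ker_eq (isHermitian_iff_isSymm.mp hFpsd.1)
    (isHermitian_iff_isSymm.mp hA.1) hker⟩

theorem stmt7 {n nc : ℕ} (hn : nc < n)
    (A M : Matrix (Fin n) (Fin n) ℝ) (P : Matrix (Fin n) (Fin nc) ℝ)
    (hA : A.PosSemidef) (hA0 : A ≠ 0)
    (hM : matNorm A (1 - M * A) ≤ 1)
    (hAc0 : Pᵀ * A * P ≠ 0)
    (Acd : Matrix (Fin nc) (Fin nc) ℝ) (hAcd : IsMP (Pᵀ * A * P) Acd)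
    (hcond : {v : Fin n → ℝ | (hA.sqrt * (M + Mᵀ - Mᵀ * A * M) * hA.sqrt).mulVec v = 0} ∩
        {v : Fin n → ℝ | (Pᵀ * (1 - A * M) * hA.sqrt).mulVec v = 0} =
      {v : Fin n → ℝ | A.mulVec v = 0})
    (Pi F : Matrix (Fin n) (Fin n) ℝ)
    (hPi : Pi = hA.sqrt * P * Acd * Pᵀ * hA.sqrt)
    (hF : F = hA.sqrt * (M + Mᵀ - Mᵀ * A * M) * hA.sqrt +
      (1 - hA.sqrt * Mᵀ * hA.sqrt) * Pi * (1 - hA.sqrt * M * hA.sqrt)) :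
    F.PosSemidef ∧
      {v : Fin n → ℝ | F.mulVec v = 0} = {v : Fin n → ℝ | A.mulVec v = 0} ∧
      {v : Fin n → ℝ | ∃ w, v = F.mulVec w} = {v : Fin n → ℝ | ∃ w, v = A.mulVec w} :=
  stmt7_general A M P hA hM Acd hAcd hcond Pi F hPi hF
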